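/- The Foulkes characters satisfy the branching rule: the restriction of φ^n_k from W_{r,n} to W_{r,n-1} equals (r(n+1)-(rk+1))·φ^{n-1}_{k-1} + (rk+1)·φ^{n-1}_k. -/

import Mathlib

/-!
Embedding `W_{r,n}` into `W_{r,n+1}` adds the last letter as a fixed point of colour `0`
and leaves the cycles of `σ`, with their colours, unchanged; hence `ℓ_{n+1} = ℓ_n + 1` on
`W_{r,n}` and `χ^{n+1}_i` restricts to `(ri+1)·χ^n_i`. Comparing coefficients of the `χ^n_i`,
the branching rule becomes
`(ri+1)·C(n+2,k-i) = (rk+1)·C(n+1,k-i) - (r(n+2)-(rk+1))·C(n+1,k-i-1)`, which is Pascal's rule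
combined with the absorption identity `(j+1)·C(m+1,j+1) = (m+1)·C(m,j)`.
-/

open Finset

/-- `ℓ_m(w)`: the number of color-`0` cycles of `w = (σ, x) ∈ W_{r,m}`. -/
def blockLen (r m : ℕ) (σ : Equiv.Perm (Fin m)) (x : Fin m → ZMod r) : ℕ :=
  (σ.cycleFactorsFinset.filter (fun c => (∑ i ∈ c.support, x i) = 0)).card +
    (Finset.univ.filter (fun i : Fin m => σ i = i ∧ x i = 0)).card

namespace Equiv.Perm

section ExtendDomain

variable {α β : Type*} [Fintype α] [DecidableEq α] [Fintype β] [DecidableEq β]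
  {p : β → Prop} [DecidablePred p]

theorem cycleFactorsFinset_extendDomain (f : α ≃ Subtype p) (σ : Perm α) :
    (σ.extendDomain f).cycleFactorsFinset =
      σ.cycleFactorsFinset.map ⟨extendDomainHom f, extendDomainHom_injective f⟩ := by
  rw [cycleFactorsFinset_eq_finset]
  refine ⟨?_, ?_, ?_⟩
  · simp only [mem_map, forall_exists_index, and_imp, forall_apply_eq_imp_iff₂]
    exact fun c hc => (mem_cycleFactorsFinset_iff.mp hc).1.extendDomain f
  · simp only [coe_map]
    exact ((cycleFactorsFinset_pairwise_disjoint σ).mono' fun _ _ h => h.extendDomain f).image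
  · conv_rhs => rw [← cycleFactorsFinset_noncommProd σ]
    rw [← extendDomainHom_apply, map_noncommProd]
    simp [Finset.noncommProd]

end ExtendDomain

variable {n : ℕ} (σ : Perm (Fin n))

@[simp]
theorem viaFintypeEmbedding_castSuccEmb_castSucc (i : Fin n) :
    σ.viaFintypeEmbedding Fin.castSuccEmb i.castSucc = (σ i).castSucc :=
  viaFintypeEmbedding_apply_image σ _ i

@[simp]
theorem viaFintypeEmbedding_castSuccEmb_last :
    σ.viaFintypeEmbedding Fin.castSuccEmb (Fin.last n) = Fin.last n :=
  viaFintypeEmbedding_apply_notMem_range σ _ (by simp)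

end Equiv.Perm

open Equiv.Perm

section BlockLen

variable {r n : ℕ} (σ : Equiv.Perm (Fin n)) (x : Fin n → ZMod r)

theorem card_zeroSum_cycleFactors_viaFintypeEmbedding_castSuccEmb :
    ((σ.viaFintypeEmbedding Fin.castSuccEmb).cycleFactorsFinset.filter
        (fun c => ∑ i ∈ c.support, Fin.snoc x (0 : ZMod r) i = 0)).card =
      (σ.cycleFactorsFinset.filter (fun c => ∑ i ∈ c.support, x i = 0)).card := by
  rw [viaFintypeEmbedding, cycleFactorsFinset_extendDomain, filter_map, card_map]
  congr 1
  refine filter_congr fun c _ => ?_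
  rw [Function.comp_apply, Function.Embedding.coeFn_mk, extendDomainHom_apply,
    support_extend_domain, sum_map]
  exact Iff.of_eq <| congrArg (· = 0) <| sum_congr rfl fun i _ => Fin.snoc_castSucc ..

theorem card_zero_fixedPoints_viaFintypeEmbedding_castSuccEmb :
    (univ.filter fun i => σ.viaFintypeEmbedding Fin.castSuccEmb i = i ∧
        (Fin.snoc x 0 : Fin (n + 1) → ZMod r) i = 0).card =
      (univ.filter fun i => σ i = i ∧ x i = 0).card + 1 := by
  rw [card_filter, card_filter, Fin.sum_univ_castSucc]
  simp

theorem blockLen_viaFintypeEmbedding_castSuccEmb :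
    blockLen r (n + 1) (σ.viaFintypeEmbedding Fin.castSuccEmb) (Fin.snoc x 0) =
      blockLen r n σ x + 1 := by
  rw [blockLen, blockLen, card_zeroSum_cycleFactors_viaFintypeEmbedding_castSuccEmb,
    card_zero_fixedPoints_viaFintypeEmbedding_castSuccEmb, add_assoc]

end BlockLen

section FoulkesSum

variable {R : Type*} [CommRing R]

theorem sub_mul_choose_succ_succ (a c : R) (m j : ℕ) :
    (c - a * (j + 1)) * (m + 1).choose (j + 1) =
      c * m.choose (j + 1) - (a * (m + 1) - c) * m.choose j := by
  have hpascal : ((m + 1).choose (j + 1) : R) = m.choose j + m.choose (j + 1) := by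
    rw [Nat.choose_succ_succ', Nat.cast_add]
  have habsorb : ((m + 1).choose (j + 1) : R) * (j + 1) = (m + 1) * m.choose j := by
    exact_mod_cast congrArg (Nat.cast : ℕ → R) (Nat.add_one_mul_choose_eq m j).symm
  linear_combination c * hpascal - a * habsorb

/-- The value of `φ^m_k` (with `r = a`) at any `w` with `ℓ_m(w) = L`. -/
def foulkesSum (a : R) (m k L : ℕ) : R :=
  ∑ j ∈ range (k + 1), (-1) ^ j * ((m + 1).choose j : R) * (a * (k - j : ℕ) + 1) ^ L

@[simp]
theorem foulkesSum_zero (a : R) (m L : ℕ) : foulkesSum a m 0 L = 1 := by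
  simp [foulkesSum]

theorem foulkesSum_succ_succ (a : R) (n k L : ℕ) :
    foulkesSum a (n + 1) (k + 1) (L + 1) =
      (a * (n + 2) - (a * (k + 1) + 1)) * foulkesSum a n k L +
        (a * (k + 1) + 1) * foulkesSum a n (k + 1) L := by
  set c : R := a * (k + 1) + 1
  have hterm : ∀ j ∈ range (k + 1),
      (-1) ^ (j + 1) * ((n + 1 + 1).choose (j + 1) : R) *
          (a * (k + 1 - (j + 1) : ℕ) + 1) ^ (L + 1) =
        (a * (n + 2) - c) * ((-1) ^ j * ((n + 1).choose j : R) * (a * (k - j : ℕ) + 1) ^ L) +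
          c * ((-1) ^ (j + 1) * ((n + 1).choose (j + 1) : R) *
            (a * (k + 1 - (j + 1) : ℕ) + 1) ^ L) := by
    intro j hj
    have hjk : j ≤ k := Nat.le_of_lt_succ (mem_range.mp hj)
    have hcast : a * ((k + 1 - (j + 1) : ℕ) : R) + 1 = c - a * (j + 1) := by
      simp only [c, Nat.add_sub_add_right, Nat.cast_sub hjk]
      ring
    rw [Nat.add_sub_add_right, ← Nat.add_sub_add_right k 1 j, hcast, pow_succ]
    have hcoeff := sub_mul_choose_succ_succ a c (n + 1) j
    push_cast at hcoeff
    linear_combination (-1) ^ (j + 1) * (c - a * (j + 1)) ^ L * hcoeff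
  unfold foulkesSum
  rw [sum_range_succ', sum_congr rfl hterm, sum_add_distrib, ← mul_sum, ← mul_sum,
    sum_range_succ' _ (k + 1)]
  simp only [Nat.reduceSubDiff, pow_zero, Nat.choose_zero_right, Nat.cast_one, mul_one, tsub_zero,
    Nat.cast_add, one_mul, c]
  ring

end FoulkesSum

/-- The Foulkes character `φ^m_k = ∑_{j=0}^{k} (-1)^j C(m+1,j) χ^m_{k-j}`
of `W_{r,m}`, where `χ^m_i(w) = (ri+1)^{ℓ_m(w)}`. -/
noncomputable def foulkesChar (r m k : ℕ)
    (w : Equiv.Perm (Fin m) × (Fin m → ZMod r)) : ℂ :=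
  ∑ j ∈ Finset.range (k + 1),
    (-1 : ℂ) ^ j * ((m + 1).choose j : ℂ) *
      ((r : ℂ) * (k - j : ℕ) + 1) ^ blockLen r m w.1 w.2

theorem foulkesChar_eq_foulkesSum (r m k : ℕ) (w : Equiv.Perm (Fin m) × (Fin m → ZMod r)) :
    foulkesChar r m k w = foulkesSum (r : ℂ) m k (blockLen r m w.1 w.2) :=
  rfl

theorem foulkesChar_branching_general (r n k : ℕ)
    (σ : Equiv.Perm (Fin n)) (x : Fin n → ZMod r) :
    foulkesChar r (n + 1) k
        (σ.viaFintypeEmbedding Fin.castSuccEmb, Fin.snoc x (0 : ZMod r)) =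
      ((r : ℂ) * (n + 2) - ((r : ℂ) * k + 1)) *
          (if k = 0 then 0 else foulkesChar r n (k - 1) (σ, x)) +
        ((r : ℂ) * k + 1) * foulkesChar r n k (σ, x) := by
  simp only [foulkesChar_eq_foulkesSum, blockLen_viaFintypeEmbedding_castSuccEmb]
  rcases k with _ | k
  · simp
  · rw [foulkesSum_succ_succ]
    simp

/-- The branching rule for Foulkes characters: restricting `φ^{n+1}_k` from
`W_{r,n+1}` to `W_{r,n}` (embedded by fixing the last letter with color `0`)
gives `(r(n+2) - (rk+1))·φ^n_{k-1} + (rk+1)·φ^n_k`. -/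
theorem foulkesChar_branching (r n k : ℕ) (hr : 1 ≤ r) (hk : k ≤ n + 1)
    (σ : Equiv.Perm (Fin n)) (x : Fin n → ZMod r) :
    foulkesChar r (n + 1) k
        (σ.viaFintypeEmbedding Fin.castSuccEmb, Fin.snoc x (0 : ZMod r)) =
      ((r : ℂ) * (n + 2) - ((r : ℂ) * k + 1)) *
          (if k = 0 then 0 else foulkesChar r n (k - 1) (σ, x)) +
        ((r : ℂ) * k + 1) * foulkesChar r n k (σ, x) :=
  foulkesChar_branching_general r n k σ x
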